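/- Let H and K be complex Hilbert spaces, let C ∈ B(H) and D ∈ B(K) be invertible, and assume a bilinear form u : H × K → ℂ satisfies |u(x,y)| ≤ ‖x‖·‖y‖ + ‖Cx‖·‖Dy‖ for all x ∈ H, y ∈ K. Then for any finite families x₁,…,x_m ∈ H and y₁,…,y_m ∈ K one has |Σᵢ₌₁^m u(xᵢ, yᵢ)| ≤ ‖Σᵢ₌₁^m xᵢ ⊗ yᵢ‖_π + ‖Σᵢ₌₁^m Cxᵢ ⊗ Dyᵢ‖_π. -/

import Mathlib

/-!
It suffices to find one representation `w = ∑ eⱼ ⊗ fⱼ` of `w = ∑ xᵢ ⊗ yᵢ` that is simultaneously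
optimal for `‖w‖_π` and `‖(C ⊗ D) w‖_π`, and then to apply the hypothesis on `u` termwise.

Taking the `xᵢ` linearly independent and a conjugate-linear isometry `κ` from `span {yᵢ}` onto a
coordinate space, `w` becomes the injective operator `V = ∑ xᵢ ⟪κ yᵢ, ·⟫` and `(C ⊗ D) w` becomes
`A = C V E*` with `E = κ' D κ⁻¹`. With polar decompositions `V = W |V|`, `A = U |A|` and
`P = E⁻¹ |A| (E⁻¹)*`, diagonalize `|V|` against `⟪P ·, ·⟫`: this gives `ηⱼ` with
`|V| ηⱼ = sⱼ P ηⱼ`, `sⱼ ≥ 0`, and `V = ∑ V ηⱼ ⟪P ηⱼ, ·⟫`. For `eⱼ = V ηⱼ` and `ζⱼ = P ηⱼ` one gets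
`eⱼ = sⱼ W ζⱼ` and `C eⱼ = U (E ζⱼ)`, so the bilinear forms `⟪W κ ·, ·⟫` and `⟪U κ' ·, ·⟫` have
norm at most one and attain `∑ ‖eⱼ‖ ‖fⱼ‖` and `∑ ‖C eⱼ‖ ‖D fⱼ‖`; both sums are therefore bounded by
the corresponding projective norms.
-/

open scoped TensorProduct

/-- The projective norm on the algebraic tensor product `H ⊗ K`:
`‖w‖_π = inf { Σᵢ ‖xᵢ‖‖yᵢ‖ : w = Σᵢ xᵢ ⊗ yᵢ }`, the infimum over all finite
representations of `w`. -/
noncomputable def projNorm {H K : Type*} [NormedAddCommGroup H] [InnerProductSpace ℂ H]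
    [NormedAddCommGroup K] [InnerProductSpace ℂ K] (w : H ⊗[ℂ] K) : ℝ :=
  sInf { r : ℝ | ∃ (m : ℕ) (x : Fin m → H) (y : Fin m → K),
    w = ∑ i, x i ⊗ₜ[ℂ] y i ∧ r = ∑ i, ‖x i‖ * ‖y i‖ }

open scoped InnerProductSpace ComplexConjugate

lemma TensorProduct.exists_fin_sum_tmul_eq {R M N : Type*} [CommSemiring R] [AddCommMonoid M]
    [AddCommMonoid N] [Module R M] [Module R N] (w : M ⊗[R] N) :
    ∃ (m : ℕ) (x : Fin m → M) (y : Fin m → N), w = ∑ i, x i ⊗ₜ[R] y i := by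
  obtain ⟨S, rfl⟩ := TensorProduct.exists_finset w
  refine ⟨S.card, fun i => (S.equivFin.symm i).1.1, fun i => (S.equivFin.symm i).1.2, ?_⟩
  rw [← Finset.sum_coe_sort S]
  exact (S.equivFin.symm.sum_comp (fun p : S => p.1.1 ⊗ₜ[R] p.1.2)).symm

lemma TensorProduct.exists_linearIndependent_sum_tmul_eq {R M N : Type*} [Field R]
    [AddCommGroup M] [Module R M] [AddCommGroup N] [Module R N] (w : M ⊗[R] N) :
    ∃ (n : ℕ) (x : Fin n → M) (y : Fin n → N), LinearIndependent R x ∧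
      w = ∑ k, x k ⊗ₜ[R] y k := by
  obtain ⟨m, x, y, rfl⟩ := exists_fin_sum_tmul_eq w
  set E := Submodule.span R (Set.range x)
  have : Module.Finite R E := FiniteDimensional.span_of_finite R (Set.finite_range x)
  set b := Module.finBasis R E
  have hx : ∀ i, x i ∈ E := fun i => Submodule.subset_span ⟨i, rfl⟩
  refine ⟨_, fun k => b k, fun k => ∑ i, b.repr ⟨x i, hx i⟩ k • y i,
    b.linearIndependent.map' E.subtype E.ker_subtype, ?_⟩
  conv_lhs => enter [2, i]; rw [show x i = E.subtype ⟨x i, hx i⟩ from rfl, ← b.sum_repr ⟨x i, hx i⟩]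
  simp only [map_sum, map_smul, sum_tmul, tmul_sum, smul_tmul]
  exact Finset.sum_comm

section ProjNorm

variable {H K : Type*} [NormedAddCommGroup H] [InnerProductSpace ℂ H]
  [NormedAddCommGroup K] [InnerProductSpace ℂ K]

lemma norm_lift_le_projNorm {B : H →ₗ[ℂ] K →ₗ[ℂ] ℂ} (hB : ∀ x y, ‖B x y‖ ≤ ‖x‖ * ‖y‖)
    (w : H ⊗[ℂ] K) : ‖TensorProduct.lift B w‖ ≤ projNorm w := by
  obtain ⟨m, x, y, hw⟩ := TensorProduct.exists_fin_sum_tmul_eq w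
  refine le_csInf ⟨_, m, x, y, hw, rfl⟩ ?_
  rintro _ ⟨n, a, b, rfl, rfl⟩
  simpa only [map_sum, TensorProduct.lift.tmul] using
    (norm_sum_le _ _).trans (Finset.sum_le_sum fun i _ => hB (a i) (b i))

lemma sum_norm_mul_norm_le_projNorm {Φ : K →ₗ⋆[ℂ] H} (hΦ : ∀ y, ‖Φ y‖ ≤ ‖y‖) {n : ℕ}
    {e : Fin n → H} {f : Fin n → K} (hef : ∀ j, ⟪Φ (f j), e j⟫_ℂ = ((‖e j‖ * ‖f j‖ : ℝ) : ℂ)) :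
    ∑ j, ‖e j‖ * ‖f j‖ ≤ projNorm (∑ j, e j ⊗ₜ[ℂ] f j) := by
  have h := norm_lift_le_projNorm (B := ((innerₛₗ ℂ : H →ₗ⋆[ℂ] H →ₗ[ℂ] ℂ).comp Φ).flip)
    (fun x y => (norm_inner_le_norm _ _).trans <|
      (mul_le_mul_of_nonneg_right (hΦ y) (norm_nonneg x)).trans_eq (mul_comm _ _))
    (∑ j, e j ⊗ₜ[ℂ] f j)
  simp only [map_sum, TensorProduct.lift.tmul, LinearMap.flip_apply, LinearMap.comp_apply,
    coe_innerₛₗ_apply, hef, ← Complex.ofReal_sum, Complex.norm_real, Real.norm_eq_abs] at h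
  exact (le_abs_self _).trans h

end ProjNorm

lemma LinearIsometry.inner_eq_norm_mul_norm_of_eq_smul {X Y : Type*} [NormedAddCommGroup X]
    [InnerProductSpace ℂ X] [NormedAddCommGroup Y] [InnerProductSpace ℂ Y] {U : Y →ₗᵢ[ℂ] X}
    {ζ : Y} {e : X} {s : ℝ} (hs : 0 ≤ s) (he : e = (s : ℂ) • U ζ) :
    ⟪U ζ, e⟫_ℂ = ((‖e‖ * ‖ζ‖ : ℝ) : ℂ) := by
  rw [he, inner_smul_right, inner_self_eq_norm_sq_to_K, RCLike.ofReal_eq_complex_ofReal,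
    norm_smul, Complex.norm_real, Real.norm_of_nonneg hs, U.norm_map]
  push_cast
  ring

namespace ContinuousLinearMap

variable {X Y : Type*} [NormedAddCommGroup X] [InnerProductSpace ℂ X]
  [NormedAddCommGroup Y] [InnerProductSpace ℂ Y] [FiniteDimensional ℂ Y]

lemma exists_equiv_coe_eq_of_injective {M : Y →L[ℂ] Y} (hM : Function.Injective M) :
    ∃ e : Y ≃L[ℂ] Y, ⇑e = ⇑M :=
  ⟨(LinearEquiv.ofInjectiveEndo (M : Y →ₗ[ℂ] Y) hM).toContinuousLinearEquiv, rfl⟩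

theorem exists_isometry_comp_nonneg [CompleteSpace X] (T : Y →L[ℂ] X)
    (hT : Function.Injective T) :
    ∃ (M : Y →L[ℂ] Y) (U : Y →ₗᵢ[ℂ] X), 0 ≤ M ∧ Function.Injective M ∧ ∀ z, T z = U (M z) := by
  have := FiniteDimensional.complete ℂ Y
  set M := CFC.sqrt (adjoint T ∘L T)
  have hM : IsSelfAdjoint M := IsSelfAdjoint.of_nonneg (CFC.sqrt_nonneg _)
  have hMM : ∀ z, M (M z) = adjoint T (T z) := fun z => congr($(CFC.sqrt_mul_sqrt_self _
    ((nonneg_iff_isPositive _).2 (isPositive_adjoint_comp_self T))) z)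
  have hnorm : ∀ z, ‖M z‖ = ‖T z‖ := fun z => by
    have h : ⟪M z, M z⟫_ℂ = ⟪T z, T z⟫_ℂ := by
      rw [← adjoint_inner_right, hM.adjoint_eq, hMM, adjoint_inner_right]
    rw [inner_self_eq_norm_sq_to_K, inner_self_eq_norm_sq_to_K] at h
    exact (pow_left_inj₀ (norm_nonneg _) (norm_nonneg _) two_ne_zero).1 (by exact_mod_cast h)
  have hinj : Function.Injective M := fun z₁ z₂ h => hT <| by
    rw [← sub_eq_zero, ← map_sub, ← norm_eq_zero, ← hnorm, map_sub, h, sub_self, norm_zero]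
  obtain ⟨e, he⟩ := exists_equiv_coe_eq_of_injective hinj
  refine ⟨M, ⟨T ∘ₗ (e.symm : Y →ₗ[ℂ] Y), fun z => ?_⟩, CFC.sqrt_nonneg _, hinj, fun z => ?_⟩
  · simp [← hnorm, ← he]
  · simp [← he]

theorem exists_generalized_eigenbasis {M P : Y →L[ℂ] Y} (hM : 0 ≤ M) (hP : 0 ≤ P)
    (hP_inj : Function.Injective P) :
    ∃ (n : ℕ) (η : Fin n → Y) (s : Fin n → ℝ), (∀ j, 0 ≤ s j) ∧
      (∀ j, M (η j) = (s j : ℂ) • P (η j)) ∧ ∀ z, ∑ j, ⟪P (η j), z⟫_ℂ • η j = z := by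
  have := FiniteDimensional.complete ℂ Y
  set R := CFC.sqrt P
  have hR : IsSelfAdjoint R := IsSelfAdjoint.of_nonneg (CFC.sqrt_nonneg _)
  have hRR : ∀ z, R (R z) = P z := fun z => congr($(CFC.sqrt_mul_sqrt_self P hP) z)
  obtain ⟨e, he⟩ := exists_equiv_coe_eq_of_injective (M := R) fun z₁ z₂ h => hP_inj <| by
    rw [← hRR, ← hRR, h]
  set Rinv : Y →L[ℂ] Y := (e.symm : Y →L[ℂ] Y)
  have hR_Rinv : ∀ z, R (Rinv z) = z := fun z => by rw [← he]; exact e.apply_symm_apply z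
  have hRinv_R : ∀ z, Rinv (R z) = z := fun z => by rw [← he]; exact e.symm_apply_apply z
  have hR_symm : ∀ x y, ⟪R x, y⟫_ℂ = ⟪x, R y⟫_ℂ := hR.isSymmetric
  have hR_adjoint_Rinv : ∀ z, R (adjoint Rinv z) = z := fun z => ext_inner_left ℂ fun w => by
    rw [← hR_symm, adjoint_inner_right, hRinv_R]
  -- with `R = √P`, the eigenbasis of `(R⁻¹)* M R⁻¹`, pulled back by `R⁻¹`, diagonalizes `M`
  -- against `P`
  have hS := (((nonneg_iff_isPositive M).1 hM).adjoint_conj Rinv).toLinearMap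
  set b := hS.isSymmetric.eigenvectorBasis rfl
  have hPb : ∀ j, P (Rinv (b j)) = R (b j) := fun j => by rw [← hRR, hR_Rinv]
  refine ⟨_, fun j => Rinv (b j), _, hS.nonneg_eigenvalues rfl, fun j => ?_, fun z => ?_⟩
  · rw [hPb, ← hR_adjoint_Rinv (M _), ← map_smul]
    exact congrArg R (hS.isSymmetric.apply_eigenvectorBasis rfl j)
  · calc ∑ j, ⟪P (Rinv (b j)), z⟫_ℂ • Rinv (b j) = Rinv (∑ j, ⟪b j, R z⟫_ℂ • b j) := by
          simp [hPb, hR_symm, map_sum]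
      _ = z := by rw [b.sum_repr', hRinv_R]

theorem exists_aligned_sum_inner_smul {X' Y' : Type*} [NormedAddCommGroup X']
    [InnerProductSpace ℂ X'] [NormedAddCommGroup Y'] [InnerProductSpace ℂ Y']
    [FiniteDimensional ℂ Y'] [CompleteSpace X] [CompleteSpace X']
    (V : Y →L[ℂ] X) (hV : Function.Injective V) (C : X →L[ℂ] X') (hC : Function.Injective C)
    (E : Y ≃L[ℂ] Y') :
    ∃ (n : ℕ) (e : Fin n → X) (ζ : Fin n → Y), (∀ z, V z = ∑ j, ⟪ζ j, z⟫_ℂ • e j) ∧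
      (∃ W : Y →ₗᵢ[ℂ] X, ∀ j, ⟪W (ζ j), e j⟫_ℂ = ((‖e j‖ * ‖ζ j‖ : ℝ) : ℂ)) ∧
      (∃ U : Y' →ₗᵢ[ℂ] X', ∀ j, ⟪U (E (ζ j)), C (e j)⟫_ℂ = ((‖C (e j)‖ * ‖E (ζ j)‖ : ℝ) : ℂ)) := by
  have := FiniteDimensional.complete ℂ Y
  have := FiniteDimensional.complete ℂ Y'
  obtain ⟨Mv, W, hMv, -, hVW⟩ := exists_isometry_comp_nonneg V hV
  set G : Y' →L[ℂ] Y := (E.symm : Y' →L[ℂ] Y)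
  have hEG : ∀ z, adjoint (E : Y →L[ℂ] Y') (adjoint G z) = z := fun z =>
    ext_inner_left ℂ fun w => by simp [adjoint_inner_right, G]
  have hGE : ∀ z, adjoint G (adjoint (E : Y →L[ℂ] Y') z) = z := fun z =>
    ext_inner_left ℂ fun w => by simp [adjoint_inner_right, G]
  set A := C ∘L V ∘L adjoint (E : Y →L[ℂ] Y')
  have hA : Function.Injective A := hC.comp (hV.comp (Function.LeftInverse.injective hGE))
  obtain ⟨Ma, U, hMa, hMa_inj, hAU⟩ := exists_isometry_comp_nonneg A hA
  -- `C V = U Ma G* = U E P`, which aligns `C (V η)` with `E (P η)`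
  set P := G ∘L Ma ∘L adjoint G
  have hP : 0 ≤ P := (nonneg_iff_isPositive _).2 (((nonneg_iff_isPositive _).1 hMa).conj_adjoint G)
  have hP_inj : Function.Injective P :=
    E.symm.injective.comp (hMa_inj.comp (Function.LeftInverse.injective hEG))
  obtain ⟨n, η, s, hs, hMη, hη⟩ := exists_generalized_eigenbasis hMv hP hP_inj
  refine ⟨n, fun j => V (η j), fun j => P (η j), fun z => ?_, ⟨W, fun j => ?_⟩, ⟨U, fun j => ?_⟩⟩
  · conv_lhs => rw [← hη z]
    simp [map_sum, map_smul]
  · exact W.inner_eq_norm_mul_norm_of_eq_smul (hs j) (by simp only [hVW, hMη, map_smul])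
  · refine U.inner_eq_norm_mul_norm_of_eq_smul zero_le_one ?_
    calc C (V (η j)) = A (adjoint G (η j)) := by simp [A, hEG]
      _ = U (Ma (adjoint G (η j))) := hAU _
      _ = _ := by simp [P, G]

end ContinuousLinearMap

noncomputable def EuclideanSpace.conjₗᵢ (ι : Type*) [Fintype ι] :
    EuclideanSpace ℂ ι ≃ₗᵢ⋆[ℂ] EuclideanSpace ℂ ι where
  toFun v := WithLp.toLp 2 fun i => conj (v i)
  invFun v := WithLp.toLp 2 fun i => conj (v i)
  map_add' v w := by ext; simp
  map_smul' c v := by ext; simp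
  left_inv v := by ext; simp
  right_inv v := by ext; simp
  norm_map' v := by simp [EuclideanSpace.norm_eq]

lemma sum_tmul_eq_sum_tmul_of_forall_inner {Y H K : Type*} [NormedAddCommGroup Y]
    [InnerProductSpace ℂ Y] [FiniteDimensional ℂ Y] [AddCommGroup H] [Module ℂ H]
    [AddCommGroup K] [Module ℂ K] (τ : Y →ₗ⋆[ℂ] K) {m n : ℕ} {a : Fin m → H} {ζ : Fin m → Y}
    {a' : Fin n → H} {ζ' : Fin n → Y}
    (h : ∀ z, ∑ i, ⟪ζ i, z⟫_ℂ • a i = ∑ j, ⟪ζ' j, z⟫_ℂ • a' j) :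
    ∑ i, a i ⊗ₜ[ℂ] τ (ζ i) = ∑ j, a' j ⊗ₜ[ℂ] τ (ζ' j) := by
  set b := stdOrthonormalBasis ℂ Y
  -- expanding each `ζ i` in `b` writes the tensor through the values of `z ↦ ∑ ⟪ζ i, z⟫ • a i`
  have hexpand : ∀ {m : ℕ} (a : Fin m → H) (ζ : Fin m → Y), ∑ i, a i ⊗ₜ[ℂ] τ (ζ i) =
      ∑ l, (∑ i, ⟪ζ i, b l⟫_ℂ • a i) ⊗ₜ[ℂ] τ (b l) := fun a ζ => by
    conv_lhs => enter [2, i]; rw [← b.sum_repr' (ζ i)]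
    simp only [map_sum, map_smulₛₗ, inner_conj_symm, TensorProduct.tmul_sum,
      TensorProduct.sum_tmul, TensorProduct.tmul_smul, TensorProduct.smul_tmul']
    exact Finset.sum_comm
  simp only [hexpand a ζ, hexpand a' ζ', h]

section Representations

variable {X Y K : Type*} [NormedAddCommGroup X] [InnerProductSpace ℂ X]
  [NormedAddCommGroup Y] [InnerProductSpace ℂ Y] [NormedAddCommGroup K] [InnerProductSpace ℂ K]

lemma injective_sum_rankOne {m : ℕ} {x : Fin m → X} (hx : LinearIndependent ℂ x) {v : Fin m → Y}
    (hv : Submodule.span ℂ (Set.range v) = ⊤) :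
    Function.Injective (∑ i, InnerProductSpace.rankOne ℂ (x i) (v i) : Y →L[ℂ] X) := by
  refine (injective_iff_map_eq_zero (∑ i, InnerProductSpace.rankOne ℂ (x i) (v i))).2 fun z hz => ?_
  have h0 : ∀ i, ⟪v i, z⟫_ℂ = 0 := Fintype.linearIndependent_iff.1 hx _ (by simpa using hz)
  obtain ⟨c, rfl⟩ := (Submodule.mem_span_range_iff_exists_fun ℂ).1 (hv ▸ Submodule.mem_top (x := z))
  rw [← inner_self_eq_zero (𝕜 := ℂ), sum_inner]
  simp only [inner_smul_left, h0, mul_zero, Finset.sum_const_zero]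

lemma LinearIsometryEquiv.span_range_apply_mk_eq_top {m : ℕ} {y : Fin m → K}
    (κ : Submodule.span ℂ (Set.range y) ≃ₗᵢ⋆[ℂ] Y) :
    Submodule.span ℂ (Set.range fun i => κ ⟨y i, Submodule.subset_span ⟨i, rfl⟩⟩) = ⊤ := by
  have hspan : Submodule.span ℂ (Set.range fun i => (⟨y i, Submodule.subset_span ⟨i, rfl⟩⟩ :
      Submodule.span ℂ (Set.range y))) = ⊤ := by
    rw [← Submodule.span_span_coe_preimage (s := Set.range y)]
    congr 1
    ext f
    simp [Subtype.ext_iff]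
  rw [Set.range_comp' κ, show ⇑κ = ⇑(κ.toLinearEquiv.toLinearMap) from rfl, Submodule.span_image,
    hspan, Submodule.map_top, LinearMap.range_eq_top.2 κ.surjective]

lemma exists_antilinear_contraction_extending (F : Submodule ℂ K) [F.HasOrthogonalProjection]
    (κ : F ≃ₗᵢ⋆[ℂ] Y) (W : Y →ₗᵢ[ℂ] X) :
    ∃ Φ : K →ₗ⋆[ℂ] X, (∀ v, ‖Φ v‖ ≤ ‖v‖) ∧ ∀ f : F, Φ f = W (κ f) :=
  ⟨(W.toLinearMap.comp κ.toLinearEquiv.toLinearMap).comp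
      (F.orthogonalProjectionOnto : K →ₗ[ℂ] F),
    fun v => by simpa using F.norm_orthogonalProjectionOnto_apply_le v,
    fun f => by simp⟩

end Representations

section Main

variable {H H' K K' : Type*} [NormedAddCommGroup H] [InnerProductSpace ℂ H] [CompleteSpace H]
  [NormedAddCommGroup H'] [InnerProductSpace ℂ H'] [CompleteSpace H']
  [NormedAddCommGroup K] [InnerProductSpace ℂ K] [NormedAddCommGroup K'] [InnerProductSpace ℂ K']

theorem exists_sum_tmul_eq_sum_norm_le_projNorm_of_linearIndependent
    {C : H →L[ℂ] H'} (hC : Function.Injective C) {D : K →L[ℂ] K'} (hD : Function.Injective D)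
    {m : ℕ} {x : Fin m → H} (hx : LinearIndependent ℂ x) (y : Fin m → K) :
    ∃ (n : ℕ) (e : Fin n → H) (f : Fin n → K), ∑ i, x i ⊗ₜ[ℂ] y i = ∑ j, e j ⊗ₜ[ℂ] f j ∧
      ∑ j, ‖e j‖ * ‖f j‖ ≤ projNorm (∑ i, x i ⊗ₜ[ℂ] y i) ∧
      ∑ j, ‖C (e j)‖ * ‖D (f j)‖ ≤
        projNorm (TensorProduct.map (C : H →ₗ[ℂ] H') (D : K →ₗ[ℂ] K') (∑ i, x i ⊗ₜ[ℂ] y i)) := by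
  set F := Submodule.span ℂ (Set.range y)
  have : FiniteDimensional ℂ F := FiniteDimensional.span_of_finite ℂ (Set.finite_range y)
  set F' := F.map (D : K →ₗ[ℂ] K')
  set κ := (stdOrthonormalBasis ℂ F).repr.trans (EuclideanSpace.conjₗᵢ _)
  set κ' := (stdOrthonormalBasis ℂ F').repr.trans (EuclideanSpace.conjₗᵢ _)
  set Dres := Submodule.equivMapOfInjective (D : K →ₗ[ℂ] K') hD F
  set E := ((κ.symm.toLinearEquiv.trans Dres).trans κ'.toLinearEquiv).toContinuousLinearEquiv
  set y₀ : Fin m → F := fun i => ⟨y i, Submodule.subset_span ⟨i, rfl⟩⟩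
  obtain ⟨n, e, ζ, hVζ, ⟨W, hW⟩, ⟨U, hU⟩⟩ := ContinuousLinearMap.exists_aligned_sum_inner_smul
    (∑ i, InnerProductSpace.rankOne ℂ (x i) (κ (y₀ i)))
    (injective_sum_rankOne hx κ.span_range_apply_mk_eq_top) C hC E
  set f : Fin n → K := fun j => κ.symm (ζ j)
  have hxy : ∑ i, x i ⊗ₜ[ℂ] y i = ∑ j, e j ⊗ₜ[ℂ] f j := by
    have := sum_tmul_eq_sum_tmul_of_forall_inner (F.subtype.comp κ.symm.toLinearEquiv.toLinearMap)
      (a := x) (ζ := fun i => κ (y₀ i)) (a' := e) (ζ' := ζ) fun z => by simpa using hVζ z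
    simpa [y₀] using this
  obtain ⟨Φ, hΦ, hΦW⟩ := exists_antilinear_contraction_extending F κ W
  obtain ⟨Ψ, hΨ, hΨU⟩ := exists_antilinear_contraction_extending F' κ' U
  refine ⟨n, e, f, hxy, hxy ▸ sum_norm_mul_norm_le_projNorm hΦ fun j => ?_, ?_⟩
  · have hf : ‖f j‖ = ‖ζ j‖ := κ.symm.norm_map (ζ j)
    simpa [hf, f, hΦW] using hW j
  · have hCD : TensorProduct.map (C : H →ₗ[ℂ] H') (D : K →ₗ[ℂ] K') (∑ i, x i ⊗ₜ[ℂ] y i) =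
        ∑ j, C (e j) ⊗ₜ[ℂ] D (f j) := by
      simp [hxy]
    have hDf : ∀ j, D (f j) = (Dres (κ.symm (ζ j)) : K') := fun j => rfl
    refine hCD ▸ sum_norm_mul_norm_le_projNorm hΨ fun j => ?_
    have hE : ∀ ζ, E ζ = κ' (Dres (κ.symm ζ)) := fun _ => rfl
    simpa [hDf, hΨU, hE] using hU j

theorem exists_sum_tmul_eq_sum_norm_le_projNorm
    {C : H →L[ℂ] H'} (hC : Function.Injective C) {D : K →L[ℂ] K'} (hD : Function.Injective D)
    (w : H ⊗[ℂ] K) :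
    ∃ (n : ℕ) (e : Fin n → H) (f : Fin n → K), w = ∑ j, e j ⊗ₜ[ℂ] f j ∧
      ∑ j, ‖e j‖ * ‖f j‖ ≤ projNorm w ∧
      ∑ j, ‖C (e j)‖ * ‖D (f j)‖ ≤
        projNorm (TensorProduct.map (C : H →ₗ[ℂ] H') (D : K →ₗ[ℂ] K') w) := by
  obtain ⟨m, x, y, hx, rfl⟩ := TensorProduct.exists_linearIndependent_sum_tmul_eq w
  exact exists_sum_tmul_eq_sum_norm_le_projNorm_of_linearIndependent hC hD hx y

end Main

theorem abs_sum_le_projNorm_add_projNorm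
    {H K : Type*} [NormedAddCommGroup H] [InnerProductSpace ℂ H] [CompleteSpace H]
    [NormedAddCommGroup K] [InnerProductSpace ℂ K]
    (C : H →L[ℂ] H) (D : K →L[ℂ] K) (hC : IsUnit C) (hD : IsUnit D)
    (u : H →ₗ[ℂ] K →ₗ[ℂ] ℂ)
    (hu : ∀ (x : H) (y : K), ‖u x y‖ ≤ ‖x‖ * ‖y‖ + ‖C x‖ * ‖D y‖)
    (m : ℕ) (x : Fin m → H) (y : Fin m → K) :
    ‖∑ i, u (x i) (y i)‖ ≤
      projNorm (∑ i, x i ⊗ₜ[ℂ] y i) + projNorm (∑ i, C (x i) ⊗ₜ[ℂ] D (y i)) := by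
  obtain ⟨n, e, f, hw, he, hCe⟩ := exists_sum_tmul_eq_sum_norm_le_projNorm
    (ContinuousLinearEquiv.unitsEquiv ℂ H hC.unit).injective
    (ContinuousLinearEquiv.unitsEquiv ℂ K hD.unit).injective (∑ i, x i ⊗ₜ[ℂ] y i)
  have hu_sum : ∑ i, u (x i) (y i) = ∑ j, u (e j) (f j) := by
    simpa using congrArg (TensorProduct.lift u) hw
  rw [show ∑ i, C (x i) ⊗ₜ[ℂ] D (y i) = TensorProduct.map (C : H →ₗ[ℂ] H) (D : K →ₗ[ℂ] K)
    (∑ i, x i ⊗ₜ[ℂ] y i) by simp]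
  calc ‖∑ i, u (x i) (y i)‖ ≤ ∑ j, ‖u (e j) (f j)‖ := hu_sum ▸ norm_sum_le _ _
    _ ≤ ∑ j, (‖e j‖ * ‖f j‖ + ‖C (e j)‖ * ‖D (f j)‖) := Finset.sum_le_sum fun j _ => hu _ _
    _ = ∑ j, ‖e j‖ * ‖f j‖ + ∑ j, ‖C (e j)‖ * ‖D (f j)‖ := Finset.sum_add_distrib
    _ ≤ _ := add_le_add he hCe
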